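/- arXiv:1805.12047 — 7 statements merged into one kernel-verified Lean document; each statement's English description precedes it below -/
import Mathlib

section
/- If μ is non-degenerate in degree d, then the nodes of any quadrature rule for μ of degree 2d with at most d+1 nodes are pairwise distinct, and moreover any quadrature rule for μ of degree 2d has at least d+1 nodes. -/
open MeasureTheory Polynomial

/-- The k-th moment of a measure on ℝ. -/
noncomputable def mom (μ : Measure ℝ) (k : ℕ) : ℝ := ∫ t, t ^ k ∂μ

/-- Non-degeneracy in degree d: moments up to degree 2d exist and
∫ f dμ > 0 for every nonzero nonnegative polynomial of degree ≤ 2d. -/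
def NonDeg (μ : Measure ℝ) (d : ℕ) : Prop :=
  (∀ k ≤ 2 * d, Integrable (fun t => t ^ k) μ) ∧
  ∀ f : Polynomial ℝ, f ≠ 0 → f.natDegree ≤ 2 * d → (∀ x, 0 ≤ f.eval x) →
    0 < ∫ t, f.eval t ∂μ

/-- Evaluation of a polynomial at a node in ℝ ∪ {∞}: at `some a` it is `f(a)`;
at `none` (infinity) it is the coefficient of degree D. -/
noncomputable def ev (D : ℕ) (x : Option ℝ) (f : Polynomial ℝ) : ℝ :=
  x.elim (f.coeff D) (fun a => f.eval a)

/-- The d × d Hankel-type moment matrix with (i,j) entry m_{i+j+k} (0-based). -/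
noncomputable def hank (μ : Measure ℝ) (d k : ℕ) : Matrix (Fin d) (Fin d) ℝ :=
  Matrix.of fun i j => mom μ ((i : ℕ) + (j : ℕ) + k)

/-!
If the nodes of a rule of degree `2d` took at most `d` distinct values, let `p` be the monic
polynomial whose roots are the finite nodes. Then `p²` is a nonzero nonnegative polynomial of
degree at most `2d` which the rule integrates to `0`: it vanishes at every finite node, and if `∞`
is a node then `p` has degree `< d`, so the coefficient of `t^{2d}` in `p²` vanishes. This
contradicts non-degeneracy; distinctness of at most `d + 1` nodes follows by counting.
-/

open Finset

lemma ev_nodal_eraseNone_sq_eq_zero {A : Finset (Option ℝ)} {d : ℕ} (hA : #A ≤ d)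
    {x : Option ℝ} (hx : x ∈ A) : ev (2 * d) x (Lagrange.nodal A.eraseNone id ^ 2) = 0 := by
  cases x with
  | none =>
    have hdeg : (Lagrange.nodal A.eraseNone id ^ 2).natDegree < 2 * d := by
      have := card_eraseNone_of_mem hx
      have := card_pos.mpr ⟨none, hx⟩
      rw [natDegree_pow, Lagrange.natDegree_nodal]
      omega
    exact coeff_eq_zero_of_natDegree_lt hdeg
  | some a =>
    simpa [ev] using Lagrange.eval_nodal_at_node (v := id) (mem_eraseNone.mpr hx)

theorem NonDeg.le_card_image_nodes {μ : Measure ℝ} {d : ℕ} (hnd : NonDeg μ d)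
    {ι : Type*} [Fintype ι] {r : ι → Option ℝ} {w : ι → ℝ}
    (hq : ∀ f : ℝ[X], f.natDegree ≤ 2 * d → ∫ t, f.eval t ∂μ = ∑ i, w i * ev (2 * d) (r i) f) :
    d + 1 ≤ #(univ.image r) := by
  by_contra! hcard
  have hA : #(univ.image r) ≤ d := Nat.le_of_lt_succ hcard
  set p := Lagrange.nodal (univ.image r).eraseNone id
  have hdeg : (p ^ 2).natDegree ≤ 2 * d := by
    rw [natDegree_pow, Lagrange.natDegree_nodal]
    have := card_eraseNone_le (univ.image r)
    omega
  have hpos : 0 < ∫ t, (p ^ 2).eval t ∂μ :=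
    hnd.2 _ (pow_ne_zero 2 Lagrange.nodal_ne_zero) hdeg fun t => by
      rw [eval_pow]; exact sq_nonneg _
  have hzero : ∫ t, (p ^ 2).eval t ∂μ = 0 := by
    rw [hq _ hdeg]
    refine sum_eq_zero fun i _ => ?_
    rw [ev_nodal_eraseNone_sq_eq_zero hA (mem_image_of_mem r (mem_univ i)), mul_zero]
  exact hpos.ne' hzero

/-- For μ non-degenerate in degree d: any quadrature rule of degree 2d with at most
d+1 nodes has pairwise distinct nodes, and any quadrature rule of degree 2d has at
least d+1 (distinct) nodes. -/
theorem stmt2 (μ : Measure ℝ) (d : ℕ) (hnd : NonDeg μ d) :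
    (∀ (n : ℕ) (r : Fin n → Option ℝ) (w : Fin n → ℝ),
      (∀ i, 0 < w i) →
      (∀ f : Polynomial ℝ, f.natDegree ≤ 2 * d →
        ∫ t, f.eval t ∂μ = ∑ i, w i * ev (2 * d) (r i) f) →
      n ≤ d + 1 → Function.Injective r) ∧
    (∀ (n : ℕ) (r : Fin n → Option ℝ) (w : Fin n → ℝ),
      (∀ i, 0 < w i) →
      (∀ f : Polynomial ℝ, f.natDegree ≤ 2 * d →
        ∫ t, f.eval t ∂μ = ∑ i, w i * ev (2 * d) (r i) f) →
      d + 1 ≤ (Finset.univ.image r).card) := by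
  refine ⟨fun n r w _ hq hn => ?_, fun n r w _ hq => hnd.le_card_image_nodes hq⟩
  have hcard : #(univ.image r) = #(univ : Finset (Fin n)) :=
    le_antisymm card_image_le (by simpa using (hnd.le_card_image_nodes hq).trans' hn)
  simpa using card_image_iff.mp hcard
end

section
/- Let μ be non-degenerate in degree d and let r_1,…,r_{d+1} ∈ ℝ ∪ {∞} be nodes of a quadrature rule for μ of degree 2d, with r_1, r_2 ∈ ℝ. Then the bilinear form B_{r_1,r_2}(p,q) = ∫ (r_1 − t)(r_2 − t) p q dμ on ℝ[t]_{≤d−1} is degenerate; equivalently, det(r_1 r_2 M_{d−1} − (r_1 + r_2) M'_{d−1} + M''_{d−1}) = 0, where M_{d−1} = (m_{i+j−2}), M'_{d−1} = (m_{i+j−1}), M''_{d−1} = (m_{i+j}) are d×d Hankel matrices of the moments of μ. -/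
/-!
The moments up to degree `2d` are those of the quadrature functional
`L f = ∑ wᵢ ev(rᵢ) f`, so the matrix is the Gram matrix of `(p, q) ↦ L((t - r₁)(t - r₂) p q)`
on polynomials of degree `< d`. The polynomial `p = ∏_{i ≥ 3} (t - rᵢ)` (a node at `∞` gives
the factor `1`) lies in its kernel: `(t - r₁)(t - r₂) p tʲ` vanishes at every real node, and if
some node is `∞` its degree is below `2d`, so `L` kills it.
-/

open MeasureTheory Polynomial

open Matrix

section Localizing

variable {K : Type*} [Field K]

noncomputable def localizingMatrix (L : K[X] →ₗ[K] K) (q : K[X]) (d : ℕ) :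
    Matrix (Fin d) (Fin d) K :=
  of fun i j => L (q * X ^ ((i : ℕ) + j))

theorem localizingMatrix_mulVec_coeff (L : K[X] →ₗ[K] K) (q : K[X]) {d : ℕ} {p : K[X]}
    (hp : p.natDegree < d) (j : Fin d) :
    (localizingMatrix L q d *ᵥ fun i => p.coeff i) j = L (q * p * X ^ (j : ℕ)) := by
  conv_rhs => rw [p.as_sum_range' d hp, ← Fin.sum_univ_eq_sum_range]
  simp only [mulVec, dotProduct, localizingMatrix, of_apply, Finset.mul_sum, Finset.sum_mul,
    map_sum, ← C_mul_X_pow_eq_monomial]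
  refine Finset.sum_congr rfl fun i _ => ?_
  rw [show q * (C (p.coeff i) * X ^ (i : ℕ)) * X ^ (j : ℕ) = p.coeff i • (q * X ^ ((j : ℕ) + i))
    by rw [smul_eq_C_mul, pow_add]; ring, map_smul, smul_eq_mul, mul_comm]

theorem det_localizingMatrix_eq_zero (L : K[X] →ₗ[K] K) (q : K[X]) {d : ℕ} {p : K[X]}
    (hp0 : p ≠ 0) (hp : p.natDegree < d) (h : ∀ j < d, L (q * p * X ^ j) = 0) :
    (localizingMatrix L q d).det = 0 := by
  rw [← exists_mulVec_eq_zero_iff]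
  refine ⟨fun i => p.coeff i, fun hv => ?_, funext fun j => ?_⟩
  · exact leadingCoeff_ne_zero.mpr hp0 (congrFun hv ⟨p.natDegree, hp⟩)
  · rw [localizingMatrix_mulVec_coeff L q hp, Pi.zero_apply, h j j.isLt]

end Localizing

noncomputable def nodeFactor (o : Option ℝ) : ℝ[X] :=
  o.elim 1 fun a => X - C a

theorem monic_nodeFactor (o : Option ℝ) : (nodeFactor o).Monic := by
  cases o <;> simp [nodeFactor, monic_X_sub_C]

theorem natDegree_nodeFactor_le (o : Option ℝ) : (nodeFactor o).natDegree ≤ 1 := by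
  cases o <;> simp [nodeFactor]

theorem natDegree_prod_nodeFactor_le {ι : Type*} (r : ι → Option ℝ) (s : Finset ι) :
    (∏ i ∈ s, nodeFactor (r i)).natDegree ≤ s.card :=
  (natDegree_prod_le _ _).trans <| by
    simpa using Finset.sum_le_sum fun i (_ : i ∈ s) => natDegree_nodeFactor_le (r i)

theorem ev_prod_nodeFactor_mul {ι : Type*} [Fintype ι] [DecidableEq ι] (r : ι → Option ℝ)
    (i : ι) {D : ℕ} {f : ℝ[X]}
    (hf : Fintype.card ι - 1 + f.natDegree < D) :
    ev D (r i) ((∏ k, nodeFactor (r k)) * f) = 0 := by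
  rw [← Finset.mul_prod_erase _ _ (Finset.mem_univ i), mul_assoc]
  cases hri : r i with
  | some a => simp [ev, nodeFactor]
  | none =>
    rw [ev, Option.elim, show nodeFactor none = 1 from rfl, one_mul]
    refine coeff_eq_zero_of_natDegree_lt (natDegree_mul_le.trans_lt (lt_of_le_of_lt ?_ hf))
    refine Nat.add_le_add_right ?_ _
    simpa using natDegree_prod_nodeFactor_le r (Finset.univ.erase i)

noncomputable def evLinear (D : ℕ) (o : Option ℝ) : ℝ[X] →ₗ[ℝ] ℝ :=
  o.elim (lcoeff ℝ D) leval

theorem evLinear_apply (D : ℕ) (o : Option ℝ) (f : ℝ[X]) : evLinear D o f = ev D o f := by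
  cases o <;> rfl

noncomputable def quadratureFunctional {ι : Type*} [Fintype ι] (D : ℕ) (w : ι → ℝ)
    (r : ι → Option ℝ) : ℝ[X] →ₗ[ℝ] ℝ :=
  ∑ i, w i • evLinear D (r i)

theorem quadratureFunctional_apply {ι : Type*} [Fintype ι] (D : ℕ) (w : ι → ℝ)
    (r : ι → Option ℝ) (f : ℝ[X]) :
    quadratureFunctional D w r f = ∑ i, w i * ev D (r i) f := by
  simp [quadratureFunctional, evLinear_apply]

theorem hank_combination_eq_localizingMatrix (μ : Measure ℝ) {d : ℕ} (L : ℝ[X] →ₗ[ℝ] ℝ)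
    (hL : ∀ k ≤ 2 * d, mom μ k = L (X ^ k)) (x y : ℝ) :
    (x * y) • hank μ d 0 - (x + y) • hank μ d 1 + hank μ d 2
      = localizingMatrix L ((X - C x) * (X - C y)) d := by
  ext i j
  have hL₀ := hL ((i : ℕ) + j) (by omega)
  have hL₁ := hL ((i : ℕ) + j + 1) (by omega)
  have hL₂ := hL ((i : ℕ) + j + 2) (by omega)
  rw [localizingMatrix, of_apply, show (X - C x) * (X - C y) * X ^ ((i : ℕ) + j)
    = (x * y) • X ^ ((i : ℕ) + j) - (x + y) • X ^ ((i : ℕ) + j + 1) + X ^ ((i : ℕ) + j + 2) by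
      simp only [smul_eq_C_mul, map_mul, map_add]; ring]
  simp only [hank, Matrix.add_apply, Matrix.sub_apply, Matrix.smul_apply, of_apply, smul_eq_mul,
    map_add, map_sub, map_smul, add_zero, hL₀, hL₁, hL₂]

/-- If μ is non-degenerate in degree d and r₁,…,r_{d+1} ∈ ℝ ∪ {∞} are the (distinct)
nodes of a quadrature rule for μ of degree 2d with r₁ = x, r₂ = y real, then
det(xy M_{d-1} - (x+y) M'_{d-1} + M''_{d-1}) = 0. -/
theorem stmt3 (μ : Measure ℝ) (d : ℕ) (hd : 1 ≤ d)
    (r : Fin (d + 1) → Option ℝ) (w : Fin (d + 1) → ℝ)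
    (hq : ∀ f : Polynomial ℝ, f.natDegree ≤ 2 * d →
      ∫ t, f.eval t ∂μ = ∑ i, w i * ev (2 * d) (r i) f)
    (x y : ℝ) (h1 : r ⟨0, by omega⟩ = some x) (h2 : r ⟨1, by omega⟩ = some y) :
    ((x * y) • hank μ d 0 - (x + y) • hank μ d 1 + hank μ d 2).det = 0 := by
  classical
  set L := quadratureFunctional (2 * d) w r
  have hmom : ∀ k ≤ 2 * d, mom μ k = L (X ^ k) := fun k hk => by
    rw [quadratureFunctional_apply, ← hq _ (by simpa using hk)]
    simp [mom]
  set i₀ : Fin (d + 1) := ⟨0, by omega⟩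
  set i₁ : Fin (d + 1) := ⟨1, by omega⟩
  set S := (Finset.univ.erase i₀).erase i₁
  have hi₁ : i₁ ∈ Finset.univ.erase i₀ := by simp [i₀, i₁, Fin.ext_iff]
  have hnode : ∏ k, nodeFactor (r k) = (X - C x) * (X - C y) * ∏ k ∈ S, nodeFactor (r k) := by
    rw [← Finset.mul_prod_erase _ _ (Finset.mem_univ i₀), ← Finset.mul_prod_erase _ _ hi₁, h1,
      h2, mul_assoc]
    rfl
  have hdeg : (∏ k ∈ S, nodeFactor (r k)).natDegree < d := by
    have hS : S.card = d - 1 := by simp [S, Finset.card_erase_of_mem hi₁]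
    have := natDegree_prod_nodeFactor_le r S
    omega
  rw [hank_combination_eq_localizingMatrix μ L hmom]
  refine det_localizingMatrix_eq_zero L _ (monic_prod_of_monic _ _ fun k _ =>
    monic_nodeFactor (r k)).ne_zero hdeg fun j hj => ?_
  rw [← hnode, quadratureFunctional_apply]
  exact Finset.sum_eq_zero fun i _ => by
    rw [ev_prod_nodeFactor_mul r i (by simp; omega), mul_zero]
end

section
/- Let μ be non-degenerate in degree d and x, y ∈ ℝ. If det(x y M_{d−1} − (x+y) M'_{d−1} + M''_{d−1}) = 0, then there exists a quadrature rule for μ of degree 2d with d+1 nodes in ℝ ∪ {∞} two of which are x and y. -/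
/-!
A kernel vector `v` of `x y M_{d-1} - (x + y) M'_{d-1} + M''_{d-1}` gives `p = ∑ vⱼ tʲ` of degree
`< d` such that `g = (t - x)(t - y) p` is orthogonal, for `L f = ∫ f dμ`, to every polynomial of
degree `< d`. Non-degeneracy forces such a `g` to have degree `d` or `d + 1` and only simple real
roots: a factor `φ ≥ 0` of degree `≥ 2`, `g = φ h`, would give `0 = L(g h) = L(φ h²) > 0`. As in
Gauss' construction, the roots of `g`, together with `∞` when `deg g = d`, are then the nodes of an
interpolatory rule, exact up to degree `2d`, whose weights `L(ℓₐ) = L(ℓₐ²)` (`ℓₐ` the Lagrange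
basis polynomials) are positive.
-/

open MeasureTheory Polynomial

open Finset Lagrange
open scoped Matrix

/-- `f ↦ ∫ f dμ` on polynomials of degree `≤ 2d`, written through the moments so that it is
linear on all of `ℝ[X]` (higher coefficients are dropped). -/
noncomputable def momentFunctional (μ : Measure ℝ) (d : ℕ) : ℝ[X] →ₗ[ℝ] ℝ :=
  ∑ k ∈ range (2 * d + 1), mom μ k • lcoeff ℝ k

section MomentFunctional

variable {μ : Measure ℝ} {d : ℕ}

lemma momentFunctional_apply (f : ℝ[X]) :
    momentFunctional μ d f = ∑ k ∈ range (2 * d + 1), mom μ k * f.coeff k := by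
  simp [momentFunctional]

lemma momentFunctional_C_mul (c : ℝ) (f : ℝ[X]) :
    momentFunctional μ d (C c * f) = c * momentFunctional μ d f := by
  rw [C_mul', map_smul, smul_eq_mul]

lemma momentFunctional_X_pow {k : ℕ} (hk : k ≤ 2 * d) :
    momentFunctional μ d (X ^ k) = mom μ k := by
  simp [momentFunctional_apply, coeff_X_pow, Nat.lt_succ_of_le hk]

lemma integral_eval_eq_momentFunctional (hint : ∀ k ≤ 2 * d, Integrable (fun t => t ^ k) μ)
    {f : ℝ[X]} (hf : f.natDegree ≤ 2 * d) :
    ∫ t, f.eval t ∂μ = momentFunctional μ d f := by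
  have hint' : ∀ k ∈ range (2 * d + 1), Integrable (fun t => f.coeff k * t ^ k) μ :=
    fun k hk => (hint k (Nat.lt_succ_iff.1 (mem_range.1 hk))).const_mul _
  simp_rw [eval_eq_sum_range' (Nat.lt_succ_of_le hf), integral_finsetSum _ hint',
    integral_const_mul, momentFunctional_apply, mom, mul_comm]

lemma NonDeg.momentFunctional_pos (hnd : NonDeg μ d) {f : ℝ[X]} (hf0 : f ≠ 0)
    (hf : f.natDegree ≤ 2 * d) (hpos : ∀ t, 0 ≤ f.eval t) : 0 < momentFunctional μ d f := by
  rw [← integral_eval_eq_momentFunctional hnd.1 hf]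
  exact hnd.2 f hf0 hf hpos

lemma NonDeg.momentFunctional_mul_self_pos (hnd : NonDeg μ d) {f : ℝ[X]} (hf0 : f ≠ 0)
    (hf : f.natDegree ≤ d) : 0 < momentFunctional μ d (f * f) :=
  hnd.momentFunctional_pos (mul_ne_zero hf0 hf0) (natDegree_mul_le.trans (by omega))
    fun t => by rw [eval_mul]; exact mul_self_nonneg _

end MomentFunctional

lemma momentFunctional_quadratic_mul_mul {μ : Measure ℝ} {d : ℕ} (x y : ℝ) {a b : ℝ[X]}
    (ha : a.natDegree < d) (hb : b.natDegree < d) :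
    momentFunctional μ d ((X - C x) * (X - C y) * a * b) =
      (fun i : Fin d => a.coeff i) ⬝ᵥ
        (((x * y) • hank μ d 0 - (x + y) • hank μ d 1 + hank μ d 2) *ᵥ
          fun j : Fin d => b.coeff j) := by
  have expand : ∀ p : ℝ[X], p.natDegree < d → p = ∑ i : Fin d, C (p.coeff i) * X ^ (i : ℕ) :=
    fun p hp => by
      rw [Fin.sum_univ_eq_sum_range (fun i => C (p.coeff i) * X ^ i)]
      simp_rw [C_mul_X_pow_eq_monomial]
      exact as_sum_range' p d hp
  have entry : ∀ i j : Fin d, momentFunctional μ d ((X - C x) * (X - C y) * X ^ ((i : ℕ) + j)) =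
      ((x * y) • hank μ d 0 - (x + y) • hank μ d 1 + hank μ d 2) i j := by
    intro i j
    have hq : (X - C x) * (X - C y) * X ^ ((i : ℕ) + j) = X ^ ((i : ℕ) + j + 2)
        - C (x + y) * X ^ ((i : ℕ) + j + 1) + C (x * y) * X ^ ((i : ℕ) + j) := by
      rw [C_add, C_mul]; ring
    rw [hq, map_add, map_sub, momentFunctional_C_mul, momentFunctional_C_mul,
      momentFunctional_X_pow (by omega), momentFunctional_X_pow (by omega),
      momentFunctional_X_pow (by omega)]
    simp only [Matrix.add_apply, Matrix.sub_apply, Matrix.smul_apply, hank, Matrix.of_apply,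
      smul_eq_mul, add_zero]
    ring
  conv_lhs => rw [expand a ha, expand b hb]
  simp only [mul_sum, sum_mul, map_sum, dotProduct, Matrix.mulVec]
  rw [sum_comm]
  refine sum_congr rfl fun i _ => sum_congr rfl fun j _ => ?_
  have hterm : (X - C x) * (X - C y) * (C (a.coeff i) * X ^ (i : ℕ)) *
      (C (b.coeff j) * X ^ (j : ℕ)) =
      C (a.coeff i * b.coeff j) * ((X - C x) * (X - C y) * X ^ ((i : ℕ) + j)) := by
    rw [C_mul, pow_add]
    ring
  rw [← entry, hterm, momentFunctional_C_mul]
  ring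

lemma exists_natDegree_lt_coeff_eq {R : Type*} [Semiring R] {d : ℕ} {v : Fin d → R}
    (hv : v ≠ 0) :
    ∃ p : R[X], p ≠ 0 ∧ p.natDegree < d ∧ (fun j : Fin d => p.coeff j) = v := by
  set p := ((degreeLTEquiv R d).symm v : R[X])
  have hpv : (fun j : Fin d => p.coeff j) = v := (degreeLTEquiv R d).apply_symm_apply v
  have hp0 : p ≠ 0 := fun h => hv (by rw [← hpv, h]; rfl)
  exact ⟨p, hp0, (natDegree_lt_iff_degree_lt hp0).2 (mem_degreeLT.1 (Subtype.prop _)), hpv⟩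

/-- For `g` of degree `d + 1` this is Riesz's quasi-orthogonality. -/
def IsQuasiOrthogonal (μ : Measure ℝ) (d : ℕ) (g : ℝ[X]) : Prop :=
  ∀ r : ℝ[X], r.natDegree < d → momentFunctional μ d (g * r) = 0

lemma isQuasiOrthogonal_quadratic_mul {μ : Measure ℝ} {d : ℕ} {x y : ℝ} {p : ℝ[X]}
    (hp : p.natDegree < d)
    (hker : ((x * y) • hank μ d 0 - (x + y) • hank μ d 1 + hank μ d 2) *ᵥ
      (fun j : Fin d => p.coeff j) = 0) :
    IsQuasiOrthogonal μ d ((X - C x) * (X - C y) * p) := fun r hr => by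
  rw [show (X - C x) * (X - C y) * p * r = (X - C x) * (X - C y) * r * p by ring,
    momentFunctional_quadratic_mul_mul x y hr hp, hker, dotProduct_zero]

lemma eval_nonneg_or_nonpos_of_forall_ne_zero {u : ℝ[X]} (hu : ∀ t, u.eval t ≠ 0) :
    (∀ t, 0 ≤ u.eval t) ∨ ∀ t, u.eval t ≤ 0 := by
  by_contra! ⟨⟨a, ha⟩, b, hb⟩
  obtain ⟨c, hc⟩ := intermediate_value_univ a b u.continuous ⟨ha.le, hb.le⟩
  exact hu c hc

namespace IsQuasiOrthogonal

variable {μ : Measure ℝ} {d : ℕ} {g : ℝ[X]}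

lemma of_C_mul {c : ℝ} (hc : c ≠ 0) (hg : IsQuasiOrthogonal μ d (C c * g)) :
    IsQuasiOrthogonal μ d g := fun r hr => by
  have := hg r hr
  rwa [mul_assoc, momentFunctional_C_mul, mul_eq_zero, or_iff_right hc] at this

lemma le_natDegree (hnd : NonDeg μ d) (hg : IsQuasiOrthogonal μ d g) (hg0 : g ≠ 0) :
    d ≤ g.natDegree := by
  by_contra! h
  exact (hnd.momentFunctional_mul_self_pos hg0 h.le).ne' (hg g h)

/-- For `g = φ h` with `φ ≥ 0` of degree `≥ 2`, `h` has degree `< d`, yet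
`L(g h) = L(φ h²) > 0`. -/
lemma natDegree_lt_two_of_dvd (hnd : NonDeg μ d) (hg : IsQuasiOrthogonal μ d g) (hg0 : g ≠ 0)
    (hgd : g.natDegree ≤ d + 1) {φ : ℝ[X]} (hφ : φ ∣ g)
    (hφnn : ∀ t, 0 ≤ φ.eval t) : φ.natDegree < 2 := by
  obtain ⟨h, rfl⟩ := hφ
  obtain ⟨hφ0, hh0⟩ := mul_ne_zero_iff.1 hg0
  rw [natDegree_mul hφ0 hh0] at hgd
  by_contra! hφd
  refine (hnd.momentFunctional_pos (mul_ne_zero hg0 hh0) ?_ fun t => ?_).ne' (hg h (by omega))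
  · rw [natDegree_mul hg0 hh0, natDegree_mul hφ0 hh0]
    omega
  · rw [eval_mul, eval_mul, mul_assoc]
    exact mul_nonneg (hφnn t) (mul_self_nonneg _)

lemma not_sq_dvd (hnd : NonDeg μ d) (hg : IsQuasiOrthogonal μ d g) (hg0 : g ≠ 0)
    (hgd : g.natDegree ≤ d + 1) (a : ℝ) : ¬(X - C a) ^ 2 ∣ g := fun hdvd => by
  have := hg.natDegree_lt_two_of_dvd hnd hg0 hgd hdvd fun t => by
    rw [eval_pow]
    exact sq_nonneg _
  rw [natDegree_pow, natDegree_X_sub_C] at this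
  omega

lemma roots_nodup (hnd : NonDeg μ d) (hg : IsQuasiOrthogonal μ d g) (hg0 : g ≠ 0)
    (hgd : g.natDegree ≤ d + 1) : g.roots.Nodup := by
  refine Multiset.nodup_iff_count_le_one.2 fun a => ?_
  by_contra! ha
  exact hg.not_sq_dvd hnd hg0 hgd a ((le_rootMultiplicity_iff hg0).1 (count_roots g ▸ ha))

/-- The factor of `g` without real roots has constant sign, so it must be constant. -/
lemma card_roots_eq_natDegree (hnd : NonDeg μ d) (hg : IsQuasiOrthogonal μ d g) (hg0 : g ≠ 0)
    (hgd : g.natDegree ≤ d + 1) :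
    Multiset.card g.roots = g.natDegree := by
  obtain ⟨u, hgu, hcard, hu⟩ := exists_prod_multiset_X_sub_C_mul g
  have hdvd : u ∣ g := Dvd.intro_left _ hgu
  have hu0 : u ≠ 0 := by
    rintro rfl
    exact hg0 (by rw [← hgu, mul_zero])
  have hnoroot : ∀ t, u.eval t ≠ 0 := fun t ht => by
    simpa [hu] using (mem_roots hu0).2 ht
  have hu1 : u.natDegree ≠ 1 := fun h => by
    obtain ⟨t, ht⟩ := exists_root_of_degree_eq_one ((degree_eq_iff_natDegree_eq hu0).2 h)
    exact hnoroot t ht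
  have hu2 : u.natDegree < 2 := by
    rcases eval_nonneg_or_nonpos_of_forall_ne_zero hnoroot with h | h
    · exact hg.natDegree_lt_two_of_dvd hnd hg0 hgd hdvd h
    · simpa using hg.natDegree_lt_two_of_dvd hnd hg0 hgd (neg_dvd.2 hdvd) fun t => by
        simpa using h t
  omega

end IsQuasiOrthogonal

lemma exists_fin_enumeration {α : Type*} (s : Finset α) {n : ℕ} (hs : s.card = n) :
    ∃ r : Fin n → α, Function.Injective r ∧ (∀ i, r i ∈ s) ∧ (∀ a ∈ s, ∃ i, r i = a) ∧
      ∀ F : α → ℝ, ∑ a ∈ s, F a = ∑ i, F (r i) := by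
  let e := s.equivFinOfCardEq hs
  refine ⟨fun i => e.symm i, Subtype.val_injective.comp e.symm.injective, fun i => (e.symm i).2,
    fun a ha => ⟨e ⟨a, ha⟩, by simp⟩, fun F => ?_⟩
  rw [← sum_coe_sort s F, ← e.symm.sum_comp]

lemma degree_sub_C_coeff_mul_lt {R : Type*} [Ring R] {f p : R[X]} (hp : p.Monic)
    (hf : f.natDegree ≤ p.natDegree) :
    (f - C (f.coeff p.natDegree) * p).degree < p.natDegree := by
  refine (degree_lt_iff_coeff_zero _ _).2 fun m hm => ?_
  rw [coeff_sub, coeff_C_mul]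
  rcases hm.eq_or_lt with rfl | hlt
  · rw [hp.coeff_natDegree, mul_one, sub_self]
  · rw [coeff_eq_zero_of_natDegree_lt (hf.trans_lt hlt), coeff_eq_zero_of_natDegree_lt hlt,
      mul_zero, sub_zero]

noncomputable def lagrangeWeight (μ : Measure ℝ) (d : ℕ) (T : Finset ℝ) (a : ℝ) : ℝ :=
  momentFunctional μ d (Lagrange.basis T id a)

section Nodes

variable {μ : Measure ℝ} {d : ℕ} {T : Finset ℝ}

/-- Gauss' argument: divide by the nodal polynomial; the quotient has degree `< d`, so it
is killed by `L`, and the remainder is reproduced by Lagrange interpolation on `T`. -/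
lemma momentFunctional_eq_sum_lagrangeWeight (hT : IsQuasiOrthogonal μ d (nodal T id))
    {f : ℝ[X]} (hf : f.degree < ↑(d + T.card)) :
    momentFunctional μ d f = ∑ a ∈ T, lagrangeWeight μ d T a * f.eval a := by
  have hmonic : (nodal T id).Monic := nodal_monic
  have hquot : momentFunctional μ d (nodal T id * (f /ₘ nodal T id)) = 0 := by
    rcases eq_or_ne (f /ₘ nodal T id) 0 with h0 | h0
    · rw [h0, mul_zero, map_zero]
    have hf0 : f ≠ 0 := by
      rintro rfl
      exact h0 (zero_divByMonic _)
    have hTf : T.card ≤ f.natDegree := by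
      rw [← natDegree_nodal (v := id)]
      exact natDegree_le_natDegree (not_lt.1 (mt (divByMonic_eq_zero_iff hmonic).2 h0))
    have := (natDegree_lt_iff_degree_lt hf0).2 hf
    exact hT _ (by rw [natDegree_divByMonic f hmonic, natDegree_nodal]; omega)
  have hrem : f %ₘ nodal T id = ∑ a ∈ T, C (f.eval a) * Lagrange.basis T id a := by
    have hdeg : (f %ₘ nodal T id).degree < T.card :=
      degree_nodal (R := ℝ) (v := id) ▸ degree_modByMonic_lt f hmonic
    rw [eq_interpolate (Set.injOn_id _) hdeg, interpolate_apply]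
    refine sum_congr rfl fun a ha => ?_
    have hnode : (nodal T id).eval a = 0 := eval_nodal_at_node (v := id) ha
    rw [id, modByMonic_eq_sub_mul_div f (nodal T id), eval_sub, eval_mul, hnode, zero_mul,
      sub_zero]
  have := congrArg (momentFunctional μ d) (modByMonic_add_div f (nodal T id))
  rw [map_add, hquot, add_zero, hrem, map_sum] at this
  rw [← this]
  exact sum_congr rfl fun a _ => by rw [momentFunctional_C_mul, lagrangeWeight, mul_comm]

lemma lagrangeWeight_pos (hnd : NonDeg μ d) (hT : IsQuasiOrthogonal μ d (nodal T id))
    (hTd : T.card ≤ d + 1) {a : ℝ} (ha : a ∈ T) : 0 < lagrangeWeight μ d T a := by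
  have hdeg : (Lagrange.basis T id a).natDegree = T.card - 1 := natDegree_basis (Set.injOn_id _) ha
  have hcard : 0 < T.card := card_pos.2 ⟨a, ha⟩
  have hsq : lagrangeWeight μ d T a =
      momentFunctional μ d (Lagrange.basis T id a * Lagrange.basis T id a) := by
    rw [momentFunctional_eq_sum_lagrangeWeight hT, sum_eq_single_of_mem a ha]
    · have hself : (Lagrange.basis T id a).eval a = 1 := eval_basis_self (Set.injOn_id _) ha
      rw [eval_mul, hself, mul_one, mul_one]
    · intro b hb hba
      have hab : (Lagrange.basis T id a).eval b = 0 := eval_basis_of_ne (v := id) hba.symm hb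
      rw [eval_mul, hab, zero_mul, mul_zero]
    · have hb0 := basis_ne_zero (Set.injOn_id _) ha
      refine degree_le_natDegree.trans_lt ?_
      rw [natDegree_mul hb0 hb0, hdeg]
      exact_mod_cast (by omega : T.card - 1 + (T.card - 1) < d + T.card)
  rw [hsq]
  exact hnd.momentFunctional_mul_self_pos (basis_ne_zero (Set.injOn_id _) ha) (by omega)

lemma momentFunctional_eq_sum_add_coeff (hT : IsQuasiOrthogonal μ d (nodal T id))
    (hk : T.card = d) {f : ℝ[X]} (hf : f.natDegree ≤ 2 * d) :
    momentFunctional μ d f = ∑ a ∈ T, lagrangeWeight μ d T a * f.eval a +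
      momentFunctional μ d (nodal T id * nodal T id) * f.coeff (2 * d) := by
  have hmonic : (nodal T id * nodal T id).Monic := nodal_monic.mul nodal_monic
  have hdeg : (nodal T id * nodal T id).natDegree = 2 * d := by
    rw [nodal_monic.natDegree_mul nodal_monic, natDegree_nodal, hk, two_mul]
  have hrem : (f - C (f.coeff (2 * d)) * (nodal T id * nodal T id)).degree < ↑(d + T.card) := by
    rw [hk, ← two_mul, ← hdeg]
    exact degree_sub_C_coeff_mul_lt hmonic (hdeg ▸ hf)
  have heval : ∀ a ∈ T,
      (f - C (f.coeff (2 * d)) * (nodal T id * nodal T id)).eval a = f.eval a := fun a ha => by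
    have hnode : (nodal T id).eval a = 0 := eval_nodal_at_node (v := id) ha
    rw [eval_sub, eval_mul, eval_mul, hnode, zero_mul, mul_zero, sub_zero]
  have hsplit := congrArg (momentFunctional μ d)
    (sub_add_cancel f (C (f.coeff (2 * d)) * (nodal T id * nodal T id)))
  rw [map_add, momentFunctional_C_mul, momentFunctional_eq_sum_lagrangeWeight hT hrem] at hsplit
  rw [← hsplit, sum_congr rfl fun a ha => by rw [heval a ha], mul_comm]

lemma exists_quadrature_of_isQuasiOrthogonal_nodal (hnd : NonDeg μ d)
    (hT : IsQuasiOrthogonal μ d (nodal T id)) (hdT : d ≤ T.card) (hTd : T.card ≤ d + 1) :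
    ∃ (N : Finset (Option ℝ)) (W : Option ℝ → ℝ), N.card = d + 1 ∧ (∀ o ∈ N, 0 < W o) ∧
      (∀ f : ℝ[X], f.natDegree ≤ 2 * d →
        momentFunctional μ d f = ∑ o ∈ N, W o * ev (2 * d) o f) ∧
      ∀ a ∈ T, some a ∈ N := by
  rcases hdT.eq_or_lt with hk | hk
  · refine ⟨insertNone T, fun o => o.elim (momentFunctional μ d (nodal T id * nodal T id))
      (lagrangeWeight μ d T), by rw [card_insertNone, hk], ?_, fun f hf => ?_,
      fun a ha => by simpa using ha⟩
    · rintro (_ | a) ha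
      · exact hnd.momentFunctional_mul_self_pos nodal_ne_zero (natDegree_nodal (R := ℝ) ▸ hk.ge)
      · exact lagrangeWeight_pos hnd hT hTd (by simpa using ha)
    · rw [sum_insertNone, momentFunctional_eq_sum_add_coeff hT hk.symm hf, add_comm]
      rfl
  · refine ⟨T.map Function.Embedding.some, fun o => o.elim 0 (lagrangeWeight μ d T),
      by rw [card_map]; omega, ?_, fun f hf => ?_, fun a ha => mem_map_of_mem _ ha⟩
    · intro o ho
      obtain ⟨a, ha, rfl⟩ := mem_map.1 ho
      exact lagrangeWeight_pos hnd hT hTd ha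
    · rw [sum_map, momentFunctional_eq_sum_lagrangeWeight hT
        (degree_le_natDegree.trans_lt (by exact_mod_cast (by omega : f.natDegree < d + T.card)))]
      rfl

end Nodes

lemma C_leadingCoeff_mul_nodal_roots {K : Type*} [Field K] [DecidableEq K] {p : K[X]}
    (hnodup : p.roots.Nodup) (hcard : Multiset.card p.roots = p.natDegree) :
    C p.leadingCoeff * nodal p.roots.toFinset id = p := by
  rw [nodal_eq, prod_eq_multiset_prod, Multiset.toFinset_val, hnodup.dedup]
  exact C_leadingCoeff_mul_prod_multiset_X_sub_C hcard

lemma IsQuasiOrthogonal.exists_quadrature {μ : Measure ℝ} {d : ℕ} {g : ℝ[X]} (hnd : NonDeg μ d)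
    (hg : IsQuasiOrthogonal μ d g) (hg0 : g ≠ 0) (hgd : g.natDegree ≤ d + 1) :
    ∃ (N : Finset (Option ℝ)) (W : Option ℝ → ℝ), N.card = d + 1 ∧ (∀ o ∈ N, 0 < W o) ∧
      (∀ f : ℝ[X], f.natDegree ≤ 2 * d →
        momentFunctional μ d f = ∑ o ∈ N, W o * ev (2 * d) o f) ∧
      ∀ a, g.IsRoot a → some a ∈ N := by
  have hnodup := hg.roots_nodup hnd hg0 hgd
  have hcard := hg.card_roots_eq_natDegree hnd hg0 hgd
  have hT : g.roots.toFinset.card = g.natDegree := by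
    rw [Multiset.toFinset_card_of_nodup hnodup, hcard]
  have hTorth : IsQuasiOrthogonal μ d (nodal g.roots.toFinset id) :=
    (C_leadingCoeff_mul_nodal_roots hnodup hcard ▸ hg).of_C_mul (leadingCoeff_ne_zero.2 hg0)
  obtain ⟨N, W, hN, hW, hexact, hmem⟩ := exists_quadrature_of_isQuasiOrthogonal_nodal hnd hTorth
    (hT ▸ hg.le_natDegree hnd hg0) (hT ▸ hgd)
  exact ⟨N, W, hN, hW, hexact, fun a ha => hmem a (by simpa [hg0] using ha)⟩

theorem stmt4_general (μ : Measure ℝ) (d : ℕ) (hnd : NonDeg μ d) (x y : ℝ)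
    (hdet : ((x * y) • hank μ d 0 - (x + y) • hank μ d 1 + hank μ d 2).det = 0) :
    ∃ (r : Fin (d + 1) → Option ℝ) (w : Fin (d + 1) → ℝ),
      (∀ i, 0 < w i) ∧ Function.Injective r ∧
      (∀ f : Polynomial ℝ, f.natDegree ≤ 2 * d →
        ∫ t, f.eval t ∂μ = ∑ i, w i * ev (2 * d) (r i) f) ∧
      ∃ i j, i ≠ j ∧ r i = some x ∧ r j = some y := by
  obtain ⟨v, hv0, hker⟩ := Matrix.exists_mulVec_eq_zero_iff.2 hdet
  obtain ⟨p, hp0, hpd, rfl⟩ := exists_natDegree_lt_coeff_eq hv0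
  set g := (X - C x) * (X - C y) * p
  have hq0 : (X - C x) * (X - C y) ≠ 0 := mul_ne_zero (X_sub_C_ne_zero x) (X_sub_C_ne_zero y)
  have hg0 : g ≠ 0 := mul_ne_zero hq0 hp0
  have hgd : g.natDegree ≤ d + 1 := by
    rw [natDegree_mul hq0 hp0, natDegree_mul (X_sub_C_ne_zero x) (X_sub_C_ne_zero y),
      natDegree_X_sub_C, natDegree_X_sub_C]
    omega
  have hg : IsQuasiOrthogonal μ d g := isQuasiOrthogonal_quadratic_mul hpd hker
  have hxy : x ≠ y := by
    rintro rfl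
    exact hg.not_sq_dvd hnd hg0 hgd x ⟨p, by ring⟩
  obtain ⟨N, W, hN, hW, hexact, hroots⟩ := hg.exists_quadrature hnd hg0 hgd
  obtain ⟨r, hr, hrN, hNr, hsum⟩ := exists_fin_enumeration N hN
  obtain ⟨i, hi⟩ := hNr _ (hroots x (by simp [g]))
  obtain ⟨j, hj⟩ := hNr _ (hroots y (by simp [g]))
  refine ⟨r, W ∘ r, fun i => hW _ (hrN i), hr, fun f hf => ?_, i, j,
    fun hij => hxy (Option.some.inj (hi.symm.trans (hij ▸ hj))), hi, hj⟩
  rw [integral_eval_eq_momentFunctional hnd.1 hf, hexact f hf, hsum]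
  rfl

/-- If μ is non-degenerate in degree d and det(xy M_{d-1} - (x+y)M'_{d-1} + M''_{d-1}) = 0,
then there is a quadrature rule for μ of degree 2d with d+1 distinct nodes in ℝ ∪ {∞},
two of which are x and y. -/
theorem stmt4 (μ : Measure ℝ) (d : ℕ) (hd : 1 ≤ d) (hnd : NonDeg μ d) (x y : ℝ)
    (hdet : ((x * y) • hank μ d 0 - (x + y) • hank μ d 1 + hank μ d 2).det = 0) :
    ∃ (r : Fin (d + 1) → Option ℝ) (w : Fin (d + 1) → ℝ),
      (∀ i, 0 < w i) ∧ Function.Injective r ∧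
      (∀ f : Polynomial ℝ, f.natDegree ≤ 2 * d →
        ∫ t, f.eval t ∂μ = ∑ i, w i * ev (2 * d) (r i) f) ∧
      ∃ i j, i ≠ j ∧ r i = some x ∧ r j = some y :=
  stmt4_general μ d hnd x y hdet
end

section
/- Let μ be non-degenerate in degree d ≥ 1. For every x ∈ ℝ, the d×d matrix M(x,x) = x² M_{d−1} − 2x M'_{d−1} + M''_{d−1} is positive definite. -/
/-! The matrix is the Gram matrix of the functions `t ↦ tⁱ (t - x)`, `i < d`, in `L²(μ)`: its
quadratic form at `v ≠ 0` is `∫ (p(t) (t - x))² dμ` with `p = ∑ vᵢ Xⁱ ≠ 0`, and `(p (X - x))²` is a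
nonzero nonnegative polynomial of degree `≤ 2d`, so non-degeneracy makes this integral positive. -/

open MeasureTheory Polynomial

lemma Polynomial.exists_ne_zero_natDegree_lt_eval_eq_sum {R : Type*} [Semiring R] {d : ℕ}
    {v : Fin d → R} (hv : v ≠ 0) :
    ∃ p : R[X], p ≠ 0 ∧ p.natDegree < d ∧ ∀ t, p.eval t = ∑ i, v i * t ^ (i : ℕ) := by
  set q := (degreeLTEquiv R d).symm v
  have hq : (q : R[X]) ≠ 0 := by
    simpa [q, Submodule.coe_eq_zero] using hv
  refine ⟨q, hq, (natDegree_lt_iff_degree_lt hq).mpr (mem_degreeLT.mp q.2), fun t => ?_⟩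
  rw [eval_eq_sum_degreeLTEquiv q.2]
  simp [q]

section Moments

variable {μ : Measure ℝ} {n : ℕ}

lemma pow_mul_sub_mul_pow_mul_sub (i j : ℕ) (x t : ℝ) :
    t ^ i * (t - x) * (t ^ j * (t - x)) = t ^ (i + j) * (t - x) ^ 2 := by
  ring

lemma pow_mul_sub_sq_eq (n : ℕ) (x t : ℝ) :
    t ^ n * (t - x) ^ 2 = t ^ (n + 2) - 2 * x * t ^ (n + 1) + x ^ 2 * t ^ n := by
  ring

lemma integrable_pow_mul_sub_sq (h : ∀ k ≤ n + 2, Integrable (fun t : ℝ => t ^ k) μ) (x : ℝ) :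
    Integrable (fun t => t ^ n * (t - x) ^ 2) μ := by
  simp_rw [pow_mul_sub_sq_eq n x]
  exact ((h _ le_rfl).sub ((h _ (by omega)).const_mul _)).add ((h _ (by omega)).const_mul _)

lemma integral_pow_mul_sub_sq (h : ∀ k ≤ n + 2, Integrable (fun t : ℝ => t ^ k) μ) (x : ℝ) :
    ∫ t, t ^ n * (t - x) ^ 2 ∂μ = x ^ 2 * mom μ n - 2 * x * mom μ (n + 1) + mom μ (n + 2) := by
  have h1 := (h (n + 1) (by omega)).const_mul (2 * x)
  have h2 := h (n + 2) le_rfl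
  have h21 : Integrable (fun t => t ^ (n + 2) - 2 * x * t ^ (n + 1)) μ := h2.sub h1
  simp_rw [pow_mul_sub_sq_eq n x]
  rw [integral_add h21 ((h n (by omega)).const_mul _), integral_sub h2 h1,
    integral_const_mul, integral_const_mul, mom, mom, mom]
  ring

end Moments

section IntegralGram

open scoped Matrix

variable {α ι : Type*} [MeasurableSpace α] (μ : Measure α)

noncomputable def integralGram (g : ι → α → ℝ) : Matrix ι ι ℝ :=
  Matrix.of fun i j => ∫ t, g i t * g j t ∂μ

lemma isHermitian_integralGram (g : ι → α → ℝ) : (integralGram μ g).IsHermitian := by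
  ext i j
  simp [integralGram, mul_comm]

variable [Fintype ι] {μ}

lemma dotProduct_integralGram_mulVec {g : ι → α → ℝ}
    (hg : ∀ i j, Integrable (fun t => g i t * g j t) μ) (v : ι → ℝ) :
    v ⬝ᵥ (integralGram μ g *ᵥ v) = ∫ t, (∑ i, v i * g i t) ^ 2 ∂μ := by
  have hg' : ∀ i j, Integrable (fun t => v i * g i t * (v j * g j t)) μ := fun i j => by
    simpa only [mul_mul_mul_comm] using (hg i j).const_mul (v i * v j)
  calc v ⬝ᵥ (integralGram μ g *ᵥ v)
      = ∑ i, ∑ j, ∫ t, v i * g i t * (v j * g j t) ∂μ := by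
        simp only [dotProduct, Matrix.mulVec, integralGram, Matrix.of_apply, Finset.mul_sum]
        refine Finset.sum_congr rfl fun i _ => Finset.sum_congr rfl fun j _ => ?_
        rw [← integral_mul_const, ← integral_const_mul]
        congr 1 with t
        ring
    _ = ∫ t, ∑ i, ∑ j, v i * g i t * (v j * g j t) ∂μ := by
        rw [integral_finsetSum _ fun i _ => integrable_finsetSum _ fun j _ => hg' i j]
        simp only [integral_finsetSum _ fun j _ => hg' _ j]
    _ = ∫ t, (∑ i, v i * g i t) ^ 2 ∂μ := by
        simp only [sq, Finset.sum_mul_sum]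

lemma posDef_integralGram {g : ι → α → ℝ} (hg : ∀ i j, Integrable (fun t => g i t * g j t) μ)
    (hpos : ∀ v : ι → ℝ, v ≠ 0 → 0 < ∫ t, (∑ i, v i * g i t) ^ 2 ∂μ) :
    (integralGram μ g).PosDef :=
  .of_dotProduct_mulVec_pos (isHermitian_integralGram μ g) fun v hv => by
    simpa [dotProduct_integralGram_mulVec hg] using hpos v hv

end IntegralGram

section NonDeg

variable {μ : Measure ℝ} {d : ℕ}

lemma smul_hank_sub_smul_hank_add_hank_eq_integralGram (hint : ∀ k ≤ 2 * d, Integrable (fun t : ℝ => t ^ k) μ)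
    (x : ℝ) :
    (x ^ 2) • hank μ d 0 - (2 * x) • hank μ d 1 + hank μ d 2 =
      integralGram μ (fun (i : Fin d) t => t ^ (i : ℕ) * (t - x)) := by
  ext i j
  simp only [integralGram, hank, Matrix.add_apply, Matrix.sub_apply, Matrix.smul_apply,
    Matrix.of_apply, smul_eq_mul, pow_mul_sub_mul_pow_mul_sub]
  rw [integral_pow_mul_sub_sq fun k hk => hint k (by omega)]
  ring_nf

lemma integrable_pow_mul_sub_mul_pow_mul_sub
    (hint : ∀ k ≤ 2 * d, Integrable (fun t : ℝ => t ^ k) μ) (x : ℝ) (i j : Fin d) :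
    Integrable (fun t => t ^ (i : ℕ) * (t - x) * (t ^ (j : ℕ) * (t - x))) μ := by
  simp only [pow_mul_sub_mul_pow_mul_sub]
  exact integrable_pow_mul_sub_sq (fun k hk => hint k (by omega)) x

lemma NonDeg.integral_sum_mul_pow_mul_sub_sq_pos (hnd : NonDeg μ d) (x : ℝ) {v : Fin d → ℝ}
    (hv : v ≠ 0) : 0 < ∫ t, (∑ i, v i * (t ^ (i : ℕ) * (t - x))) ^ 2 ∂μ := by
  obtain ⟨p, hp0, hpdeg, hpeval⟩ := exists_ne_zero_natDegree_lt_eval_eq_sum hv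
  have hdeg : ((p * (X - C x)) ^ 2).natDegree ≤ 2 * d :=
    calc ((p * (X - C x)) ^ 2).natDegree ≤ 2 * (p.natDegree + (X - C x).natDegree) :=
          natDegree_pow_le.trans (Nat.mul_le_mul_left 2 natDegree_mul_le)
      _ ≤ 2 * d := by rw [natDegree_X_sub_C]; omega
  have hpos := hnd.2 _ (pow_ne_zero 2 (mul_ne_zero hp0 (X_sub_C_ne_zero x))) hdeg
    fun y => by rw [eval_pow]; positivity
  simpa [hpeval, Finset.sum_mul, mul_assoc] using hpos

end NonDeg

theorem stmt5_general (μ : Measure ℝ) (d : ℕ) (hnd : NonDeg μ d) (x : ℝ) :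
    ((x ^ 2) • hank μ d 0 - (2 * x) • hank μ d 1 + hank μ d 2).PosDef := by
  rw [smul_hank_sub_smul_hank_add_hank_eq_integralGram hnd.1 x]
  exact posDef_integralGram (integrable_pow_mul_sub_mul_pow_mul_sub hnd.1 x)
    fun _ hv => hnd.integral_sum_mul_pow_mul_sub_sq_pos x hv

/-- If μ is non-degenerate in degree d ≥ 1, then for every x ∈ ℝ the matrix
M(x,x) = x² M_{d-1} - 2x M'_{d-1} + M''_{d-1} is positive definite. -/
theorem stmt5 (μ : Measure ℝ) (d : ℕ) (hd : 1 ≤ d) (hnd : NonDeg μ d) (x : ℝ) :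
    ((x ^ 2) • hank μ d 0 - (2 * x) • hank μ d 1 + hank μ d 2).PosDef :=
  stmt5_general μ d hnd x
end

section
/- Let μ be non-degenerate in degree d ≥ 1 and fix y ∈ ℝ. Then all roots of the degree-≤d polynomial F(x, y) = det(x y M_{d−1} − (x+y) M'_{d−1} + M''_{d−1}) ∈ ℝ[x] are real. -/
/-!
With `A = y M - M'` and `B = y M' - M''`, the matrix `y A - B = y² M - 2y M' + M''` is the Gram
matrix of the functions `(y - t) tⁱ` in `L²(μ)`, hence positive definite by non-degeneracy: its
form at `c` is `∫ ((y - t) ∑ cᵢ tⁱ)² dμ`. If `(z A - B) v = 0` with `v ≠ 0`, then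
`v* (y A - B) v = (y - z) v* A v`; the left side is positive and `v* A v` is real, so `z` is real.
-/

open MeasureTheory Polynomial

open scoped Matrix ComplexOrder

namespace Matrix

variable {n : Type*} [Fintype n]

lemma re_star_dotProduct_map_ofReal_mulVec (Q : Matrix n n ℝ) (v : n → ℂ) :
    (star v ⬝ᵥ Q.map (↑) *ᵥ v).re
      = (fun i => (v i).re) ⬝ᵥ Q *ᵥ (fun i => (v i).re)
        + (fun i => (v i).im) ⬝ᵥ Q *ᵥ (fun i => (v i).im) := by
  simp only [dotProduct, mulVec, map_apply, Pi.star_apply, Finset.mul_sum, Complex.re_sum,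
    ← Finset.sum_add_distrib]
  refine Finset.sum_congr rfl fun i _ => Finset.sum_congr rfl fun j _ => ?_
  simp only [Complex.star_def, Complex.mul_re, Complex.mul_im, Complex.conj_re,
    Complex.conj_im, Complex.ofReal_re, Complex.ofReal_im]
  ring

theorem PosDef.map_ofReal {Q : Matrix n n ℝ} (hQ : Q.PosDef) :
    (Q.map ((↑) : ℝ → ℂ)).PosDef := by
  have hH : (Q.map ((↑) : ℝ → ℂ)).IsHermitian :=
    hQ.isHermitian.map _ fun x => (Complex.conj_ofReal x).symm
  refine .of_dotProduct_mulVec_pos hH fun v hv => Complex.pos_iff.mpr ⟨?_, ?_⟩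
  · have hre_or_im : (fun i => (v i).re) ≠ 0 ∨ (fun i => (v i).im) ≠ 0 := by
      contrapose! hv
      exact funext fun i => Complex.ext (congrFun hv.1 i) (congrFun hv.2 i)
    have hpos {x : n → ℝ} (hx : x ≠ 0) : 0 < x ⬝ᵥ Q *ᵥ x := by
      simpa using hQ.dotProduct_mulVec_pos hx
    have hnonneg (x : n → ℝ) : 0 ≤ x ⬝ᵥ Q *ᵥ x := by
      simpa using hQ.posSemidef.dotProduct_mulVec_nonneg x
    rw [re_star_dotProduct_map_ofReal_mulVec]
    rcases hre_or_im with h | h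
    · exact add_pos_of_pos_of_nonneg (hpos h) (hnonneg _)
    · exact add_pos_of_nonneg_of_pos (hnonneg _) (hpos h)
  · simpa using (hH.im_star_dotProduct_mulVec_self v).symm

theorem im_eq_zero_of_det_smul_sub_eq_zero [DecidableEq n] {A B : Matrix n n ℝ} (hA : A.IsSymm)
    {y : ℝ} (hAB : (y • A - B).PosDef) {z : ℂ}
    (hz : (z • A.map ((↑) : ℝ → ℂ) - B.map ((↑) : ℝ → ℂ)).det = 0) : z.im = 0 := by
  obtain ⟨v, hv, hzv⟩ := exists_mulVec_eq_zero_iff.mpr hz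
  set α := star v ⬝ᵥ A.map ((↑) : ℝ → ℂ) *ᵥ v
  have hα : α.im = 0 := by
    simpa using (isHermitian_iff_isSymm.mpr hA).map _ (fun x => (Complex.conj_ofReal x).symm)
      |>.im_star_dotProduct_mulVec_self v
  have hform : star v ⬝ᵥ (y • A - B).map (↑) *ᵥ v = (y - z) * α := by
    have h0 : star v ⬝ᵥ (z • A.map ((↑) : ℝ → ℂ) - B.map (↑)) *ᵥ v = 0 := by
      rw [hzv, dotProduct_zero]
    rw [sub_mulVec, smul_mulVec, dotProduct_sub, dotProduct_smul, smul_eq_mul] at h0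
    have hmap : (y • A - B).map ((↑) : ℝ → ℂ) = (y : ℂ) • A.map (↑) - B.map (↑) := by
      ext i j; simp
    rw [hmap, sub_mulVec, smul_mulVec, dotProduct_sub, dotProduct_smul, smul_eq_mul]
    linear_combination h0
  obtain ⟨hre, him⟩ := Complex.pos_iff.mp (hform ▸ hAB.map_ofReal.dotProduct_mulVec_pos hv)
  simp only [Complex.mul_re, Complex.mul_im, Complex.sub_re, Complex.sub_im, Complex.ofReal_re,
    Complex.ofReal_im, hα, mul_zero, sub_zero, zero_sub, zero_add, neg_mul] at hre him
  have hα0 : α.re ≠ 0 := fun h => by simp [h] at hre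
  exact (mul_eq_zero.mp (neg_eq_zero.mp him.symm)).resolve_right hα0

end Matrix

theorem Polynomial.aeval_det_of_C_mul_X_sub_C {n R S : Type*} [Fintype n] [DecidableEq n]
    [CommRing R] [CommRing S] [Algebra R S] (A B : Matrix n n R) (z : S) :
    aeval z (Matrix.of fun i j => C (A i j) * X - C (B i j)).det
      = (z • A.map (algebraMap R S) - B.map (algebraMap R S)).det := by
  rw [AlgHom.map_det]
  congr 1
  ext i j
  simp only [AlgHom.mapMatrix_apply, Matrix.map_apply, Matrix.of_apply, map_sub, map_mul, aeval_C,
    aeval_X, Matrix.sub_apply, Matrix.smul_apply, smul_eq_mul, mul_comm]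

theorem MeasureTheory.dotProduct_mulVec_integral_mul {α ι : Type*} [MeasurableSpace α]
    {μ : Measure α} [Fintype ι] {φ : ι → α → ℝ}
    (hφ : ∀ i j, Integrable (fun t => φ i t * φ j t) μ) (c : ι → ℝ) :
    c ⬝ᵥ (Matrix.of fun i j => ∫ t, φ i t * φ j t ∂μ) *ᵥ c = ∫ t, (∑ i, c i * φ i t) ^ 2 ∂μ := by
  have hexpand : (fun t => (∑ i, c i * φ i t) ^ 2)
      = fun t => ∑ i, ∑ j, c i * (c j * (φ i t * φ j t)) := by
    funext t
    rw [sq, Finset.sum_mul_sum]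
    exact Finset.sum_congr rfl fun i _ => Finset.sum_congr rfl fun j _ => by ring
  have hint (i j : ι) : Integrable (fun t => c i * (c j * (φ i t * φ j t))) μ :=
    ((hφ i j).const_mul _).const_mul _
  rw [hexpand, integral_finsetSum _ fun i _ => integrable_finsetSum _ fun j _ => hint i j]
  refine Finset.sum_congr rfl fun i _ => ?_
  rw [integral_finsetSum _ fun j _ => hint i j]
  simp only [Matrix.mulVec, dotProduct, Finset.mul_sum]
  refine Finset.sum_congr rfl fun j _ => ?_
  rw [integral_const_mul, integral_const_mul, Matrix.of_apply]
  ring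

section Moments

variable {μ : Measure ℝ} {d : ℕ}

lemma sub_mul_pow_mul_sub_mul_pow (y t : ℝ) (i j : ℕ) :
    (y - t) * t ^ i * ((y - t) * t ^ j)
      = y ^ 2 * t ^ (i + j) - 2 * y * t ^ (i + j + 1) + t ^ (i + j + 2) := by
  ring

lemma NonDeg.integrable_sub_mul_pow_mul (hnd : NonDeg μ d) (y : ℝ) {i j : ℕ}
    (h : i + j + 2 ≤ 2 * d) : Integrable (fun t => (y - t) * t ^ i * ((y - t) * t ^ j)) μ := by
  simp_rw [sub_mul_pow_mul_sub_mul_pow]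
  exact ((((hnd.1 _ (by omega)).const_mul _).sub ((hnd.1 _ (by omega)).const_mul _)).add
    (hnd.1 _ h))

lemma NonDeg.integral_sub_mul_pow_mul (hnd : NonDeg μ d) (y : ℝ) {i j : ℕ}
    (h : i + j + 2 ≤ 2 * d) :
    ∫ t, (y - t) * t ^ i * ((y - t) * t ^ j) ∂μ
      = y ^ 2 * mom μ (i + j) - 2 * y * mom μ (i + j + 1) + mom μ (i + j + 2) := by
  have h₀ := (hnd.1 (i + j) (by omega)).const_mul (y ^ 2)
  have h₁ := (hnd.1 (i + j + 1) (by omega)).const_mul (2 * y)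
  have h₀₁ : Integrable (fun t => y ^ 2 * t ^ (i + j) - 2 * y * t ^ (i + j + 1)) μ := h₀.sub h₁
  simp_rw [sub_mul_pow_mul_sub_mul_pow]
  rw [integral_add h₀₁ (hnd.1 _ h), integral_sub h₀ h₁, integral_const_mul,
    integral_const_mul]
  rfl

lemma NonDeg.integral_sq_sum_pos (hnd : NonDeg μ d) (y : ℝ) {c : Fin d → ℝ} (hc : c ≠ 0) :
    0 < ∫ t, (∑ i, c i * ((y - t) * t ^ (i : ℕ))) ^ 2 ∂μ := by
  set p : ℝ[X] := ↑((degreeLTEquiv ℝ d).symm c)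
  have hp_mem : p ∈ degreeLT ℝ d := ((degreeLTEquiv ℝ d).symm c).2
  have hp : p ≠ 0 := by simpa [p] using hc
  have hp_eval (t : ℝ) : p.eval t = ∑ i, c i * t ^ (i : ℕ) := by
    simp [eval_eq_sum_degreeLTEquiv hp_mem, p]
  have hp_deg : p.natDegree < d := (natDegree_lt_iff_degree_lt hp).mpr (mem_degreeLT.mp hp_mem)
  have hf_ne : ((C y - X) * p) ^ 2 ≠ 0 :=
    pow_ne_zero _ (mul_ne_zero (by simpa using neg_ne_zero.mpr (X_sub_C_ne_zero y)) hp)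
  have hf_deg : (((C y - X) * p) ^ 2).natDegree ≤ 2 * d := by
    have hlin : (C y - X).natDegree ≤ 1 := (natDegree_sub_le _ _).trans (by simp)
    calc (((C y - X) * p) ^ 2).natDegree ≤ 2 * ((C y - X) * p).natDegree := natDegree_pow_le
      _ ≤ 2 * ((C y - X).natDegree + p.natDegree) := by gcongr; exact natDegree_mul_le
      _ ≤ 2 * d := by omega
  convert hnd.2 _ hf_ne hf_deg fun t => by simpa using sq_nonneg _ using 3 with t
  simp only [eval_pow, eval_mul, eval_sub, eval_C, eval_X, hp_eval, Finset.mul_sum]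
  exact congrArg (· ^ 2) (Finset.sum_congr rfl fun i _ => by ring)

theorem NonDeg.posDef_hank (hnd : NonDeg μ d) (y : ℝ) :
    (y ^ 2 • hank μ d 0 - (2 * y) • hank μ d 1 + hank μ d 2).PosDef := by
  set φ : Fin d → ℝ → ℝ := fun i t => (y - t) * t ^ (i : ℕ)
  have hbound (i j : Fin d) : (i : ℕ) + j + 2 ≤ 2 * d := by omega
  have hgram : y ^ 2 • hank μ d 0 - (2 * y) • hank μ d 1 + hank μ d 2
      = Matrix.of fun i j => ∫ t, φ i t * φ j t ∂μ := by
    ext i j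
    simp [φ, hank, hnd.integral_sub_mul_pow_mul y (hbound i j)]
  rw [hgram]
  refine .of_dotProduct_mulVec_pos ?_ fun c hc => ?_
  · ext i j
    simp only [Matrix.conjTranspose_apply, Matrix.of_apply, star_trivial, mul_comm]
  · rw [star_trivial, dotProduct_mulVec_integral_mul
      (fun i j => hnd.integrable_sub_mul_pow_mul y (hbound i j))]
    exact hnd.integral_sq_sum_pos y hc

end Moments

theorem stmt6_general (μ : Measure ℝ) (d : ℕ) (hnd : NonDeg μ d) (y : ℝ) :
    ∀ z : ℂ, Polynomial.aeval z
      (Matrix.det (Matrix.of fun i j : Fin d =>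
        Polynomial.C (y * mom μ ((i : ℕ) + (j : ℕ)) - mom μ ((i : ℕ) + (j : ℕ) + 1)) * Polynomial.X
        - Polynomial.C (y * mom μ ((i : ℕ) + (j : ℕ) + 1) - mom μ ((i : ℕ) + (j : ℕ) + 2)))) = 0 →
      z.im = 0 := by
  intro z hz
  set A := y • hank μ d 0 - hank μ d 1
  set B := y • hank μ d 1 - hank μ d 2
  have hA : A.IsSymm := by
    ext i j
    simp [A, hank, add_comm (i : ℕ)]
  have hpencil : y • A - B = y ^ 2 • hank μ d 0 - (2 * y) • hank μ d 1 + hank μ d 2 := by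
    simp only [A, B]
    module
  refine Matrix.im_eq_zero_of_det_smul_sub_eq_zero hA (hpencil ▸ hnd.posDef_hank y) ?_
  rw [← Complex.coe_algebraMap, ← aeval_det_of_C_mul_X_sub_C]
  -- the entries `mom μ (i + j + 0)` of `hank μ d 0` are definitionally `mom μ (i + j)`
  exact hz

/-- For μ non-degenerate in degree d ≥ 1 and fixed y ∈ ℝ, all (complex) roots of the
polynomial F(x,y) = det(x(y M_{d-1} - M'_{d-1}) - (y M'_{d-1} - M''_{d-1})) ∈ ℝ[x] are real. -/
theorem stmt6 (μ : Measure ℝ) (d : ℕ) (hd : 1 ≤ d) (hnd : NonDeg μ d) (y : ℝ) :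
    ∀ z : ℂ, Polynomial.aeval z
      (Matrix.det (Matrix.of fun i j : Fin d =>
        Polynomial.C (y * mom μ ((i : ℕ) + (j : ℕ)) - mom μ ((i : ℕ) + (j : ℕ) + 1)) * Polynomial.X
        - Polynomial.C (y * mom μ ((i : ℕ) + (j : ℕ) + 1) - mom μ ((i : ℕ) + (j : ℕ) + 2)))) = 0 →
      z.im = 0 :=
  stmt6_general μ d hnd y
end

section
/- Let μ be non-degenerate in degree d ≥ 1, let s_1,…,s_d be the roots of det(xM_{d−1} − M'_{d−1}) and w_∞ = det(M_d)/det(M_{d−1}). Let y ∈ ℝ with det(yM_{d−1} − M'_{d−1}) ≠ 0, and let y, r_1,…,r_d ∈ ℝ be the nodes of the quadrature rule of degree 2d through y. Set q_y = ∏_{i=1}^d (t − s_i) − ∏_{j=1}^d (t − r_j), a polynomial of degree ≤ d−1. Then for all p ∈ ℝ[t]_{≤d−1}, ∫ p·q_y·(t − y) dμ = w_∞ · (coefficient of t^{d−1} in p). -/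
/-!
Write `M = hank μ d 0`, `M' = hank μ d 1`. Then `∏ (X - s_i) = det (X M - M') / det M` is the
characteristic polynomial of `M⁻¹ M'`, and `M⁻¹ M'` is a companion matrix: it sends `e_k` to
`e_{k+1}` for `k + 1 < d` and `e_{d-1}` to `M⁻¹ (m_{i+d})_i`. Cayley–Hamilton applied to `e_0`
therefore gives the coefficients of `∏ (X - s_i)`, which is the monic orthogonal polynomial of
degree `d`: it is orthogonal to `tⁱ` for `i < d`, and a Schur complement shows
`∫ t^d ∏ (t - s_i) dμ = det M_d / det M_{d-1}`.

The polynomial `p ∏ (t - r_j) (t - y)` has degree `≤ 2d` and vanishes at every node of the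
quadrature rule, so its integral is `0`. What remains is `∫ p (t - y) ∏ (t - s_i) dμ`, in which
only the coefficient of `t^d` in `p (t - y)`, namely `p_{d-1}`, survives.
-/

open MeasureTheory Polynomial

namespace Matrix

variable {n : Type*} [Fintype n] [DecidableEq n]

lemma det_of_C_mul_X_sub_C {K : Type*} [Field K] {A : Matrix n n K} (hA : A.det ≠ 0)
    (B : Matrix n n K) :
    (of fun i j => C (A i j) * X - C (B i j)).det = C A.det * (A⁻¹ * B).charpoly := by
  have hfactor : (of fun i j => C (A i j) * X - C (B i j))
      = A.map C * charmatrix (A⁻¹ * B) := by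
    rw [charmatrix, mul_sub, RingHom.mapMatrix_apply, ← Matrix.map_mul,
      mul_nonsing_inv_cancel_left _ _ (isUnit_iff_ne_zero.mpr hA)]
    ext i j
    simp [mul_apply, diagonal_apply]
  rw [hfactor, det_mul, charpoly, ← RingHom.mapMatrix_apply, ← RingHom.map_det]

lemma charpoly_coeff_eq_neg_pow_mulVec {R : Type*} [CommRing R] [Nontrivial R] {d : ℕ}
    (A : Matrix (Fin d) (Fin d) R) (v : Fin d → R)
    (hv : ∀ k (hk : k < d), (A ^ k) *ᵥ v = Pi.single ⟨k, hk⟩ 1) (i : Fin d) :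
    A.charpoly.coeff i = -((A ^ d) *ᵥ v) i := by
  have hCH : ∑ k ∈ Finset.range (d + 1), A.charpoly.coeff k • ((A ^ k) *ᵥ v) = 0 := by
    simpa [aeval_eq_sum_range, sum_mulVec, smul_mulVec] using
      congrArg (· *ᵥ v) (aeval_self_charpoly A)
  have hlead : A.charpoly.coeff d = 1 := by
    simpa using (charpoly_monic A).coeff_natDegree
  simp_rw [Finset.sum_range_succ, hlead, one_smul, Finset.sum_range, hv _ (Fin.is_lt _),
    Fin.eta, ← Pi.single_smul', smul_eq_mul, mul_one, Finset.univ_sum_single] at hCH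
  exact eq_neg_of_add_eq_zero_left (congrFun hCH i)

end Matrix

section PolynomialIntegrals

variable {μ : Measure ℝ} {n : ℕ}

lemma integrable_pow_mul_eval {i : ℕ} (hμ : ∀ k < i + n, Integrable (fun t => t ^ k) μ)
    {f : ℝ[X]} (hf : f.natDegree < n) : Integrable (fun t => t ^ i * f.eval t) μ := by
  simp_rw [eval_eq_sum_range' hf, Finset.mul_sum, mul_left_comm _ (f.coeff _), ← pow_add]
  exact integrable_finsetSum _ fun k hk =>
    (hμ _ (by simp only [Finset.mem_range] at hk; omega)).const_mul _

lemma integral_pow_mul_eval {i : ℕ} (hμ : ∀ k < i + n, Integrable (fun t => t ^ k) μ)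
    {f : ℝ[X]} (hf : f.natDegree < n) :
    ∫ t, t ^ i * f.eval t ∂μ = ∑ k ∈ Finset.range n, f.coeff k * mom μ (i + k) := by
  simp_rw [eval_eq_sum_range' hf, Finset.mul_sum, mul_left_comm _ (f.coeff _), ← pow_add]
  rw [integral_finsetSum _ fun k hk =>
    (hμ _ (by simp only [Finset.mem_range] at hk; omega)).const_mul _]
  exact Finset.sum_congr rfl fun k _ => integral_const_mul _ _

lemma integral_eval_mul_eq_coeff_mul {φ : ℝ → ℝ}
    (hφ : ∀ i ≤ n, Integrable (fun t => t ^ i * φ t) μ)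
    (horth : ∀ i < n, ∫ t, t ^ i * φ t ∂μ = 0) {h : ℝ[X]} (hh : h.natDegree ≤ n) :
    ∫ t, h.eval t * φ t ∂μ = h.coeff n * ∫ t, t ^ n * φ t ∂μ := by
  simp_rw [eval_eq_sum_range' (Nat.lt_succ_of_le hh), Finset.sum_mul, mul_assoc]
  rw [integral_finsetSum _ fun k hk =>
    (hφ k (Nat.lt_succ_iff.mp (Finset.mem_range.mp hk))).const_mul _,
    Finset.sum_range_succ, integral_const_mul, add_eq_right]
  exact Finset.sum_eq_zero fun k hk => by
    rw [integral_const_mul, horth k (Finset.mem_range.mp hk), mul_zero]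

end PolynomialIntegrals

section Hankel

open Matrix

variable {μ : Measure ℝ} {d : ℕ}

lemma integral_sq_sum_pow_eq_dotProduct_hank_mulVec
    (hμ : ∀ k ≤ 2 * d, Integrable (fun t => t ^ k) μ) (x : Fin d → ℝ) :
    ∫ t, (∑ i, x i * t ^ (i : ℕ)) ^ 2 ∂μ = x ⬝ᵥ hank μ d 0 *ᵥ x := by
  have hint (i j : Fin d) :
      Integrable (fun t => x i * t ^ (i : ℕ) * (x j * t ^ (j : ℕ))) μ := by
    simpa only [mul_mul_mul_comm, ← pow_add] using (hμ (i + j) (by omega)).const_mul _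
  simp_rw [sq, Finset.sum_mul_sum]
  rw [integral_finsetSum _ fun i _ => integrable_finsetSum _ fun j _ => hint i j]
  refine Finset.sum_congr rfl fun i _ => ?_
  rw [integral_finsetSum _ fun j _ => hint i j, Matrix.mulVec, dotProduct, Finset.mul_sum]
  refine Finset.sum_congr rfl fun j _ => ?_
  simp_rw [mul_mul_mul_comm, ← pow_add]
  rw [integral_const_mul]
  simp only [hank, mom, of_apply, add_zero]
  ring

lemma hank_posDef (hnd : NonDeg μ d) : (hank μ d 0).PosDef := by
  refine Matrix.PosDef.of_dotProduct_mulVec_pos ?_ fun x hx => ?_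
  · ext i j
    simp [hank, add_comm (i : ℕ)]
  set P := ((degreeLTEquiv ℝ d).symm x : ℝ[X])
  have hPeval (t : ℝ) : P.eval t = ∑ i, x i * t ^ (i : ℕ) := by
    simp [P, eval_eq_sum_degreeLTEquiv (Submodule.coe_mem _)]
  have hP : P ≠ 0 := by simpa [P] using hx
  have hPdeg : (P ^ 2).natDegree ≤ 2 * d := by
    have : P.natDegree < d :=
      (natDegree_lt_iff_degree_lt hP).mpr (mem_degreeLT.mp (Submodule.coe_mem _))
    exact natDegree_pow_le.trans (by omega)
  rw [star_trivial, ← integral_sq_sum_pow_eq_dotProduct_hank_mulVec hnd.1]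
  simpa [hPeval] using hnd.2 (P ^ 2) (pow_ne_zero 2 hP) hPdeg fun t => by rw [eval_pow]; positivity

noncomputable def momVec (μ : Measure ℝ) (d k : ℕ) : Fin d → ℝ := fun i => mom μ (i + k)

noncomputable def orthPoly (μ : Measure ℝ) (d : ℕ) : ℝ[X] :=
  ((hank μ d 0)⁻¹ * hank μ d 1).charpoly

lemma natDegree_orthPoly : (orthPoly μ d).natDegree = d := by
  simp [orthPoly]

lemma orthPoly_monic : (orthPoly μ d).Monic :=
  charpoly_monic _

lemma orthPoly_eq_of_det_eq {s : Fin d → ℝ} (hdet : (hank μ d 0).det ≠ 0)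
    (hs : (of fun i j : Fin d => C (mom μ (i + j)) * X - C (mom μ (i + j + 1))).det
      = C (hank μ d 0).det * ∏ i, (X - C (s i))) :
    orthPoly μ d = ∏ i, (X - C (s i)) :=
  mul_left_cancel₀ (C_ne_zero.mpr hdet) ((det_of_C_mul_X_sub_C hdet (hank μ d 1)).symm.trans hs)

lemma hank_mulVec_single (k : ℕ) (j : Fin d) :
    hank μ d k *ᵥ Pi.single j 1 = momVec μ d (j + k) := by
  ext i
  simp [hank, momVec, add_assoc]

lemma hank_inv_mulVec_momVec (hdet : (hank μ d 0).det ≠ 0) {k : ℕ} (hk : k < d) :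
    (hank μ d 0)⁻¹ *ᵥ momVec μ d k = Pi.single ⟨k, hk⟩ 1 := by
  have hcol : hank μ d 0 *ᵥ Pi.single ⟨k, hk⟩ 1 = momVec μ d k := hank_mulVec_single 0 _
  rw [← hcol, mulVec_mulVec, nonsing_inv_mul _ (isUnit_iff_ne_zero.mpr hdet), one_mulVec]

lemma hank_inv_mul_pow_mulVec (hdet : (hank μ d 0).det ≠ 0) {k : ℕ} (hk : k ≤ d) :
    ((hank μ d 0)⁻¹ * hank μ d 1) ^ k *ᵥ ((hank μ d 0)⁻¹ *ᵥ momVec μ d 0)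
      = (hank μ d 0)⁻¹ *ᵥ momVec μ d k := by
  induction k with
  | zero => rw [pow_zero, one_mulVec]
  | succ k ih =>
    rw [pow_succ', ← mulVec_mulVec, ih (by omega), hank_inv_mulVec_momVec hdet (by omega),
      ← mulVec_mulVec, hank_mulVec_single]

lemma orthPoly_coeff (hdet : (hank μ d 0).det ≠ 0) (i : Fin d) :
    (orthPoly μ d).coeff i = -((hank μ d 0)⁻¹ *ᵥ momVec μ d d) i := by
  rw [orthPoly, charpoly_coeff_eq_neg_pow_mulVec _ _
      (fun k hk => (hank_inv_mul_pow_mulVec hdet hk.le).trans (hank_inv_mulVec_momVec hdet hk)),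
    hank_inv_mul_pow_mulVec hdet le_rfl]

lemma det_hank_succ (hdet : (hank μ d 0).det ≠ 0) :
    (hank μ (d + 1) 0).det = (hank μ d 0).det
      * (mom μ (2 * d) - momVec μ d d ⬝ᵥ (hank μ d 0)⁻¹ *ᵥ momVec μ d d) := by
  have : Invertible (hank μ d 0) := invertibleOfIsUnitDet _ (isUnit_iff_ne_zero.mpr hdet)
  have hblocks : hank μ (d + 1) 0
      = (fromBlocks (hank μ d 0) (replicateCol (Fin 1) (momVec μ d d))
          (replicateRow (Fin 1) (momVec μ d d)) (of fun _ _ => mom μ (2 * d))).submatrix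
        finSumFinEquiv.symm finSumFinEquiv.symm := by
    ext p q
    obtain ⟨a, rfl⟩ := finSumFinEquiv.surjective p
    obtain ⟨b, rfl⟩ := finSumFinEquiv.surjective q
    rcases a with i | i <;> rcases b with j | j <;>
      simp only [hank, momVec, of_apply, add_zero, submatrix_apply, finSumFinEquiv_apply_left,
        finSumFinEquiv_apply_right, finSumFinEquiv_symm_apply_castAdd,
        finSumFinEquiv_symm_apply_natAdd, Fin.val_castAdd, Fin.val_natAdd, Fin.val_eq_zero,
        fromBlocks_apply₁₁, fromBlocks_apply₁₂, fromBlocks_apply₂₁, fromBlocks_apply₂₂,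
        replicateCol_apply, replicateRow_apply] <;>
      congr 1 <;> omega
  rw [hblocks, det_submatrix_equiv_self, det_fromBlocks₁₁, invOf_eq_nonsing_inv, det_fin_one,
    Matrix.mul_assoc, ← replicateCol_mulVec, Matrix.sub_apply,
    replicateRow_mul_replicateCol_apply, of_apply]

lemma integral_pow_mul_orthPoly (hμ : ∀ k ≤ 2 * d, Integrable (fun t => t ^ k) μ)
    (hdet : (hank μ d 0).det ≠ 0) {i : ℕ} (hi : i ≤ d) :
    ∫ t, t ^ i * (orthPoly μ d).eval t ∂μ
      = mom μ (i + d)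
        - ∑ k : Fin d, mom μ (i + k) * ((hank μ d 0)⁻¹ *ᵥ momVec μ d d) k := by
  have hlead : (orthPoly μ d).coeff d = 1 := by
    simpa [natDegree_orthPoly] using orthPoly_monic.coeff_natDegree
  rw [integral_pow_mul_eval (fun k hk => hμ k (by omega))
      (natDegree_orthPoly.trans_lt d.lt_succ_self),
    Finset.sum_range_succ, hlead, one_mul, Finset.sum_range]
  simp only [orthPoly_coeff hdet, neg_mul, mul_comm (mom μ _)]
  rw [Finset.sum_neg_distrib, neg_add_eq_sub]

lemma integral_pow_mul_orthPoly_of_lt (hμ : ∀ k ≤ 2 * d, Integrable (fun t => t ^ k) μ)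
    (hdet : (hank μ d 0).det ≠ 0) {i : ℕ} (hi : i < d) :
    ∫ t, t ^ i * (orthPoly μ d).eval t ∂μ = 0 := by
  have hrow : ∑ k : Fin d, mom μ (i + k) * ((hank μ d 0)⁻¹ *ᵥ momVec μ d d) k
      = (hank μ d 0 *ᵥ (hank μ d 0)⁻¹ *ᵥ momVec μ d d) ⟨i, hi⟩ := rfl
  rw [integral_pow_mul_orthPoly hμ hdet hi.le, hrow, mulVec_mulVec,
    mul_nonsing_inv _ (isUnit_iff_ne_zero.mpr hdet), one_mulVec, momVec, sub_self]

lemma integral_pow_self_mul_orthPoly (hμ : ∀ k ≤ 2 * d, Integrable (fun t => t ^ k) μ)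
    (hdet : (hank μ d 0).det ≠ 0) :
    ∫ t, t ^ d * (orthPoly μ d).eval t ∂μ = (hank μ (d + 1) 0).det / (hank μ d 0).det := by
  rw [integral_pow_mul_orthPoly hμ hdet le_rfl, det_hank_succ hdet, mul_div_cancel_left₀ _ hdet,
    ← two_mul, dotProduct]
  simp only [momVec, add_comm (d : ℕ)]

lemma integral_eval_mul_orthPoly (hnd : NonDeg μ d) {h : ℝ[X]} (hh : h.natDegree ≤ d) :
    ∫ t, (h * orthPoly μ d).eval t ∂μ
      = h.coeff d * ((hank μ (d + 1) 0).det / (hank μ d 0).det) := by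
  have hdet : (hank μ d 0).det ≠ 0 := (hank_posDef hnd).det_pos.ne'
  simp only [eval_mul]
  rw [← integral_pow_self_mul_orthPoly hnd.1 hdet]
  exact integral_eval_mul_eq_coeff_mul
    (fun i hi => integrable_pow_mul_eval (fun k hk => hnd.1 k (by omega))
      (natDegree_orthPoly.trans_lt d.lt_succ_self))
    (fun i hi => integral_pow_mul_orthPoly_of_lt hnd.1 hdet hi) hh

end Hankel

theorem stmt12_general (μ : Measure ℝ) (d : ℕ) (hd : 1 ≤ d) (hnd : NonDeg μ d)
    (s : Fin d → ℝ)
    (hs : Matrix.det (Matrix.of fun i j : Fin d =>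
        Polynomial.C (mom μ ((i : ℕ) + (j : ℕ))) * Polynomial.X
        - Polynomial.C (mom μ ((i : ℕ) + (j : ℕ) + 1)))
      = Polynomial.C (hank μ d 0).det * ∏ i, (Polynomial.X - Polynomial.C (s i)))
    (y : ℝ)
    (r : Fin d → ℝ) (wy : ℝ) (w : Fin d → ℝ)
    (hq : ∀ f : Polynomial ℝ, f.natDegree ≤ 2 * d →
      ∫ t, f.eval t ∂μ = wy * f.eval y + ∑ j, w j * f.eval (r j)) :
    ∀ p : Polynomial ℝ, p.natDegree ≤ d - 1 →
      ∫ t, p.eval t *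
          ((∏ i, (Polynomial.X - Polynomial.C (s i))).eval t
            - (∏ j, (Polynomial.X - Polynomial.C (r j))).eval t) * (t - y) ∂μ
        = ((hank μ (d + 1) 0).det / (hank μ d 0).det) * p.coeff (d - 1) := by
  intro p hp
  have hQ := orthPoly_eq_of_det_eq (hank_posDef hnd).det_pos.ne' hs
  set h := p * (X - C y)
  set Qr := ∏ j, (X - C (r j))
  have hh : h.natDegree ≤ d := natDegree_mul_le.trans (by rw [natDegree_X_sub_C]; omega)
  have hQr : Qr.natDegree ≤ d := (natDegree_prod_le _ _).trans (by simp)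
  have hsub : (orthPoly μ d - Qr).natDegree ≤ d :=
    (natDegree_sub_le _ _).trans (max_le natDegree_orthPoly.le hQr)
  have hroot (j : Fin d) : Qr.eval (r j) = 0 := by
    simp [Qr, eval_prod, Finset.prod_eq_zero (Finset.mem_univ j)]
  have hcoeff : h.coeff d = p.coeff (d - 1) := by
    obtain ⟨e, rfl⟩ : ∃ e, d = e + 1 := ⟨d - 1, by omega⟩
    rw [coeff_mul_X_sub_C, coeff_eq_zero_of_natDegree_lt (p := p) (n := e + 1) (by omega)]
    simp
  calc ∫ t, p.eval t * ((∏ i, (X - C (s i))).eval t - Qr.eval t) * (t - y) ∂μ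
      = ∫ t, (h * (orthPoly μ d - Qr)).eval t ∂μ := by
        rw [hQ]
        congr with t
        simp only [h, eval_mul, eval_sub, eval_X, eval_C]
        ring
    _ = ∫ t, (h * orthPoly μ d).eval t ∂μ := by
        -- both integrands have degree `≤ 2d` and agree at every node, since `h y = 0 = Qr (r j)`
        rw [hq (h * (orthPoly μ d - Qr)) (natDegree_mul_le.trans (by omega)),
          hq (h * orthPoly μ d) (natDegree_mul_le.trans (by rw [natDegree_orthPoly]; omega))]
        simp [h, hroot]
    _ = (hank μ (d + 1) 0).det / (hank μ d 0).det * p.coeff (d - 1) := by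
        rw [integral_eval_mul_orthPoly hnd hh, hcoeff, mul_comm]

/-- Let μ be non-degenerate in degree d ≥ 1, s₁,…,s_d the roots of det(x M_{d-1} - M'_{d-1}),
w_∞ = det M_d / det M_{d-1}, and y ∈ ℝ with det(y M_{d-1} - M'_{d-1}) ≠ 0. Let
y, r₁,…,r_d ∈ ℝ be the nodes of a quadrature rule of degree 2d through y and set
q_y = ∏(t - s_i) - ∏(t - r_j). Then for all p of degree ≤ d-1,
∫ p q_y (t - y) dμ = w_∞ · (coeff of t^{d-1} in p). -/
theorem stmt12 (μ : Measure ℝ) (d : ℕ) (hd : 1 ≤ d) (hnd : NonDeg μ d)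
    (s : Fin d → ℝ)
    (hs : Matrix.det (Matrix.of fun i j : Fin d =>
        Polynomial.C (mom μ ((i : ℕ) + (j : ℕ))) * Polynomial.X
        - Polynomial.C (mom μ ((i : ℕ) + (j : ℕ) + 1)))
      = Polynomial.C (hank μ d 0).det * ∏ i, (Polynomial.X - Polynomial.C (s i)))
    (y : ℝ) (hy : (y • hank μ d 0 - hank μ d 1).det ≠ 0)
    (r : Fin d → ℝ) (wy : ℝ) (w : Fin d → ℝ)
    (hwy : 0 < wy) (hw : ∀ j, 0 < w j)
    (hq : ∀ f : Polynomial ℝ, f.natDegree ≤ 2 * d →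
      ∫ t, f.eval t ∂μ = wy * f.eval y + ∑ j, w j * f.eval (r j)) :
    ∀ p : Polynomial ℝ, p.natDegree ≤ d - 1 →
      ∫ t, p.eval t *
          ((∏ i, (Polynomial.X - Polynomial.C (s i))).eval t
            - (∏ j, (Polynomial.X - Polynomial.C (r j))).eval t) * (t - y) ∂μ
        = ((hank μ (d + 1) 0).det / (hank μ d 0).det) * p.coeff (d - 1) :=
  stmt12_general μ d hd hnd s hs y r wy w hq
end

section
/- Let μ be non-degenerate in degree d ≥ 1, fix y ∈ ℝ, and suppose y is strictly larger than all roots of det(λM_{d−1} − M'_{d−1}). Then the matrix yM_{d−1} − M'_{d−1} is positive definite, and the solutions x of F(x,y) = 0 coincide with the generalized eigenvalues of the pair (yM'_{d−1} − M''_{d−1}, yM_{d−1} − M'_{d−1}), i.e., {x ∈ ℝ : F(x,y) = 0} = {x : det(x(yM_{d−1} − M'_{d−1}) − (yM'_{d−1} − M''_{d−1})) = 0}. -/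
open MeasureTheory Polynomial

/-!
The Hankel matrix `M = M_{d-1}` is the Gram matrix of the monomials `1, t, …, t^{d-1}` for the
measure `μ`, so non-degeneracy makes it positive definite. With `S = √M` the pencil
`λ M - M'` is `S (λ - B) S` for the symmetric matrix `B = S⁻¹ M' S⁻¹`, so the roots of
`det (λ M - M')` are the eigenvalues of `B`. A `y` above all of them makes `y - B`, and hence
`y M - M'`, positive definite. The second claim is the identity
`x y M - (x + y) M' + M'' = x (y M - M') - (y M' - M'')`.
-/

open Matrix

namespace Matrix
variable {n : Type*} [Fintype n] [DecidableEq n]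

lemma mem_spectrum_iff_det_smul_one_sub_eq_zero {B : Matrix n n ℝ} {l : ℝ} :
    l ∈ spectrum ℝ B ↔ (l • 1 - B).det = 0 := by
  rw [spectrum.mem_iff, Algebra.algebraMap_eq_smul_one, isUnit_iff_isUnit_det, isUnit_iff_ne_zero,
    not_not]

open scoped Pointwise in
lemma IsHermitian.posDef_smul_one_sub {B : Matrix n n ℝ} (hB : B.IsHermitian) {y : ℝ}
    (hy : ∀ l ∈ spectrum ℝ B, l < y) : (y • 1 - B).PosDef := by
  have hC : (y • 1 - B).IsHermitian := (isHermitian_one.smul (IsSelfAdjoint.all y)).sub hB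
  rw [hC.posDef_iff_eigenvalues_pos]
  intro i
  have hi : hC.eigenvalues i ∈ ({y} : Set ℝ) - spectrum ℝ B := by
    rw [spectrum.singleton_sub_eq, Algebra.algebraMap_eq_smul_one]
    exact hC.eigenvalues_mem_spectrum_real i
  obtain ⟨_, rfl, l, hl, he⟩ := hi
  linarith [hy l hl]

open scoped MatrixOrder in
lemma PosDef.exists_smul_sub_eq_star_mul_mul {M A : Matrix n n ℝ} (hM : M.PosDef)
    (hA : A.IsHermitian) : ∃ S B : Matrix n n ℝ, IsUnit S ∧ B.IsHermitian ∧
      ∀ l : ℝ, l • M - A = star S * (l • 1 - B) * S := by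
  set S := CFC.sqrt M
  have hS : star S = S := (CFC.sqrt_nonneg M).posSemidef.1
  have hSS : S * S = M := CFC.sqrt_mul_sqrt_self M hM.posSemidef.nonneg
  have hSu : IsUnit S := isUnit_of_mul_isUnit_left (hSS ▸ hM.isUnit)
  refine ⟨S, S⁻¹ * A * S⁻¹, hSu, ?_, fun l => ?_⟩
  · have hSinv : (S⁻¹)ᴴ = S⁻¹ := by
      rw [conjTranspose_nonsing_inv, ← star_eq_conjTranspose, hS]
    rw [IsHermitian, conjTranspose_mul, conjTranspose_mul, hSinv, hA.eq, Matrix.mul_assoc]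
  · have h1 : S⁻¹ * S = 1 := nonsing_inv_mul S ((isUnit_iff_isUnit_det S).mp hSu)
    have h2 : S * S⁻¹ = 1 := mul_nonsing_inv S ((isUnit_iff_isUnit_det S).mp hSu)
    rw [hS, Matrix.mul_sub, Matrix.sub_mul, Matrix.mul_smul, Matrix.smul_mul, Matrix.mul_one, hSS]
    simp only [← Matrix.mul_assoc, h2, Matrix.one_mul]
    rw [Matrix.mul_assoc, h1, Matrix.mul_one]

lemma PosDef.smul_sub_of_forall_det_eq_zero_lt {M A : Matrix n n ℝ} (hM : M.PosDef)
    (hA : A.IsHermitian) {y : ℝ} (hy : ∀ l : ℝ, (l • M - A).det = 0 → l < y) :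
    (y • M - A).PosDef := by
  obtain ⟨S, B, hS, hB, hpencil⟩ := hM.exists_smul_sub_eq_star_mul_mul hA
  rw [hpencil, hS.posDef_star_left_conjugate_iff]
  refine hB.posDef_smul_one_sub fun l hl => hy l ?_
  rw [hpencil, det_mul, det_mul, mem_spectrum_iff_det_smul_one_sub_eq_zero.mp hl, mul_zero,
    zero_mul]

end Matrix

lemma hank_isHermitian (μ : Measure ℝ) (d k : ℕ) : (hank μ d k).IsHermitian := by
  ext i j
  simp [hank, add_comm]

lemma Polynomial.eval_ofFn {d : ℕ} (v : Fin d → ℝ) (t : ℝ) :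
    (ofFn d v).eval t = ∑ i, v i * t ^ (i : ℕ) := by
  simp [ofFn_eq_sum_monomial, eval_finsetSum]

lemma dotProduct_hank_zero_mulVec {μ : Measure ℝ} {d : ℕ}
    (hint : ∀ k ≤ 2 * d, Integrable (fun t => t ^ k) μ) (v : Fin d → ℝ) :
    star v ⬝ᵥ hank μ d 0 *ᵥ v = ∫ t, (ofFn d v).eval t ^ 2 ∂μ := by
  have hint' (i j : Fin d) : Integrable (fun t => v i * v j * t ^ ((i : ℕ) + j)) μ :=
    (hint _ (by omega)).const_mul _
  have hsq (t : ℝ) : (ofFn d v).eval t ^ 2 = ∑ i, ∑ j, v i * v j * t ^ ((i : ℕ) + j) := by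
    rw [eval_ofFn, sq, Finset.sum_mul_sum]
    exact Finset.sum_congr rfl fun i _ => Finset.sum_congr rfl fun j _ => by ring
  simp_rw [hsq]
  rw [integral_finsetSum _ fun i _ => integrable_finsetSum _ fun j _ => hint' i j]
  refine Finset.sum_congr rfl fun i _ => ?_
  rw [integral_finsetSum _ fun j _ => hint' i j, mulVec, dotProduct, Finset.mul_sum]
  refine Finset.sum_congr rfl fun j _ => ?_
  rw [integral_const_mul]
  simp only [hank, mom, of_apply, star_trivial, add_zero]
  ring

lemma hank_zero_posDef {μ : Measure ℝ} {d : ℕ} (hnd : NonDeg μ d) : (hank μ d 0).PosDef := by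
  refine .of_dotProduct_mulVec_pos (hank_isHermitian μ d 0) fun v hv => ?_
  have hp : ofFn d v ≠ 0 := (map_ne_zero_iff _ (injective_ofFn d)).mpr hv
  have hdeg : (ofFn d v ^ 2).natDegree ≤ 2 * d := by
    rw [natDegree_pow]
    have := natDegree_le_of_degree_le (ofFn_degree_lt v).le
    omega
  rw [dotProduct_hank_zero_mulVec hnd.1]
  simpa only [eval_pow] using hnd.2 _ (pow_ne_zero 2 hp) hdeg fun t => by
    rw [eval_pow]; positivity

theorem stmt19_general (μ : Measure ℝ) (d : ℕ) (hnd : NonDeg μ d) (y : ℝ)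
    (hy : ∀ l : ℝ, (l • hank μ d 0 - hank μ d 1).det = 0 → l < y) :
    (y • hank μ d 0 - hank μ d 1).PosDef ∧
    ∀ x : ℝ,
      ((x * y) • hank μ d 0 - (x + y) • hank μ d 1 + hank μ d 2).det = 0 ↔
      (x • (y • hank μ d 0 - hank μ d 1) - (y • hank μ d 1 - hank μ d 2)).det = 0 := by
  refine ⟨(hank_zero_posDef hnd).smul_sub_of_forall_det_eq_zero_lt (hank_isHermitian μ d 1) hy,
    fun x => ?_⟩
  rw [show (x * y) • hank μ d 0 - (x + y) • hank μ d 1 + hank μ d 2 =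
      x • (y • hank μ d 0 - hank μ d 1) - (y • hank μ d 1 - hank μ d 2) by module]

/-- If μ is non-degenerate in degree d ≥ 1 and y is strictly larger than every root of
det(λ M_{d-1} - M'_{d-1}), then y M_{d-1} - M'_{d-1} is positive definite and the solutions
of F(x,y) = 0 are exactly the generalized eigenvalues:
det(x(y M_{d-1} - M'_{d-1}) - (y M'_{d-1} - M''_{d-1})) = 0. -/
theorem stmt19 (μ : Measure ℝ) (d : ℕ) (hd : 1 ≤ d) (hnd : NonDeg μ d) (y : ℝ)
    (hy : ∀ l : ℝ, (l • hank μ d 0 - hank μ d 1).det = 0 → l < y) :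
    (y • hank μ d 0 - hank μ d 1).PosDef ∧
    ∀ x : ℝ,
      ((x * y) • hank μ d 0 - (x + y) • hank μ d 1 + hank μ d 2).det = 0 ↔
      (x • (y • hank μ d 0 - hank μ d 1) - (y • hank μ d 1 - hank μ d 2)).det = 0 :=
  stmt19_general μ d hnd y hy
end
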